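/- If F ∈ H^∞ is G-extremal and I is inner, then IF is G-extremal; i.e., ∥IF∥_G = ∥IF∥_∞. -/

import Mathlib

open MeasureTheory Complex Real Filter Topology
open scoped ENNReal

/-- Normalized arc-length measure on the circle, parametrized by angle θ ∈ (0, 2π]. -/
noncomputable def circleM : Measure ℝ :=
  (ENNReal.ofReal (2 * Real.pi))⁻¹ • (volume.restrict (Set.Ioc 0 (2 * Real.pi)))

/-- Poisson kernel (density of harmonic measure ω_z w.r.t. circleM) at the boundary
point with angle θ. -/
noncomputable def pk (z : ℂ) (θ : ℝ) : ℝ :=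
  (1 - ‖z‖ ^ 2) / ‖Complex.exp (θ * Complex.I) - z‖ ^ 2

/-- Poisson integral of a complex boundary function. -/
noncomputable def poissonInt (f : ℝ → ℂ) (z : ℂ) : ℂ :=
  ∫ θ, (pk z θ : ℂ) * f θ ∂circleM

/-- Poisson integral of a real boundary function. -/
noncomputable def poissonIntR (u : ℝ → ℝ) (z : ℂ) : ℝ :=
  ∫ θ, pk z θ * u θ ∂circleM

/-- Φ_f(z) = P(|f|²)(z) - |Pf(z)|². -/
noncomputable def Phi (f : ℝ → ℂ) (z : ℂ) : ℝ :=
  (∫ θ, pk z θ * ‖f θ‖ ^ 2 ∂circleM) - ‖poissonInt f z‖ ^ 2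

/-- The open unit disk. -/
def unitDisk : Set ℂ := Metric.ball 0 1

/-- The Garsia norm ‖f‖_G = sup_{z ∈ 𝔻} Φ_f(z)^{1/2}, valued in ℝ≥0∞. -/
noncomputable def garsiaNorm (f : ℝ → ℂ) : ℝ≥0∞ :=
  ⨆ z : unitDisk, ENNReal.ofReal (Real.sqrt (Phi f (z : ℂ)))

lemma exp_sub_ne {z : ℂ} (hz : ‖z‖ < 1) (θ : ℝ) :
    Complex.exp (θ * Complex.I) - z ≠ 0 := by
  intro h
  have h1 : ‖Complex.exp (θ * Complex.I)‖ = 1 := Complex.norm_exp_ofReal_mul_I θ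
  rw [sub_eq_zero] at h
  rw [h] at h1
  exact absurd h1 (ne_of_lt hz)

lemma pk_nonneg {z : ℂ} (hz : ‖z‖ < 1) (θ : ℝ) : 0 ≤ pk z θ := by
  apply div_nonneg
  · nlinarith [norm_nonneg z]
  · positivity

lemma pk_cont {z : ℂ} (hz : ‖z‖ < 1) : Continuous (pk z) := by
  apply Continuous.div continuous_const
  · exact (continuous_norm.comp ((Complex.continuous_exp.comp
      (Complex.continuous_ofReal.mul continuous_const)).sub continuous_const)).pow 2
  · exact fun θ => pow_ne_zero _ (norm_ne_zero_iff.mpr (exp_sub_ne hz θ))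

lemma pk_eq {z : ℂ} (hz : ‖z‖ < 1) (θ : ℝ) :
    pk z θ = (2 * Complex.exp (θ * Complex.I) / (Complex.exp (θ * Complex.I) - z)).re - 1 := by
  set w := Complex.exp (θ * Complex.I) with hw
  have hne : w - z ≠ 0 := exp_sub_ne hz θ
  have h1 : ‖w‖ = 1 := Complex.norm_exp_ofReal_mul_I θ
  have h1' : w.re ^ 2 + w.im ^ 2 = 1 := by
    have h2 := Complex.sq_norm w
    rw [h1] at h2
    simpa [Complex.normSq_apply, sq] using h2.symm
  have hd : Complex.normSq (w - z) ≠ 0 := (Complex.normSq_pos.2 hne).ne'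
  have key : (2 * w).re * (w - z).re + (2 * w).im * (w - z).im
      = (1 - Complex.normSq z) + Complex.normSq (w - z) := by
    simp only [Complex.normSq_apply, Complex.sub_re, Complex.sub_im, Complex.mul_re,
      Complex.mul_im, Complex.re_ofNat, Complex.im_ofNat]
    linear_combination h1'
  rw [pk, Complex.div_re, Complex.sq_norm, Complex.sq_norm, ← add_div, key, add_div,
    div_self hd]
  ring

lemma cont_f {z : ℂ} (hz : ‖z‖ < 1) :
    Continuous (fun θ : ℝ => 2 * Complex.exp (θ * Complex.I) / (Complex.exp (θ * Complex.I) - z)) := by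
  apply Continuous.div
  · exact continuous_const.mul (Complex.continuous_exp.comp
      (Complex.continuous_ofReal.mul continuous_const))
  · exact (Complex.continuous_exp.comp
      (Complex.continuous_ofReal.mul continuous_const)).sub continuous_const
  · exact fun θ => exp_sub_ne hz θ

lemma integral_f {z : ℂ} (hz : ‖z‖ < 1) :
    (∫ θ in (0:ℝ)..(2*π), 2 * Complex.exp (θ * Complex.I) / (Complex.exp (θ * Complex.I) - z))
      = 4 * π := by
  have hzball : z ∈ Metric.ball (0:ℂ) 1 := by
    simpa [Metric.mem_ball, Complex.dist_eq] using hz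
  have h0ball : (0:ℂ) ∈ Metric.ball (0:ℂ) 1 := by simp
  have hc1 : (∮ w in C(0,1), (w - z)⁻¹) = 2 * π * Complex.I :=
    circleIntegral.integral_sub_inv_of_mem_ball hzball
  have hc0 : (∮ w in C(0,1), (w - 0)⁻¹) = 2 * π * Complex.I :=
    circleIntegral.integral_sub_inv_of_mem_ball h0ball
  have ia : CircleIntegrable (fun w => (w - z)⁻¹) 0 1 := by
    rw [circleIntegrable_sub_inv_iff]
    right
    simp only [Metric.mem_sphere, Complex.dist_eq, abs_one]
    rw [sub_zero]
    exact fun h => absurd h (ne_of_lt hz)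
  have ib : CircleIntegrable (fun w => (w - 0)⁻¹) 0 1 := by
    rw [circleIntegrable_sub_inv_iff]
    right
    simp [Metric.mem_sphere, Complex.dist_eq]
  have ia2 : CircleIntegrable (fun w => 2 * (w - z)⁻¹) 0 1 := by
    exact ia.const_mul 2
  have hsub : (∮ w in C(0,1), (2 * (w - z)⁻¹ - (w - 0)⁻¹)) = 2 * π * Complex.I := by
    rw [circleIntegral.integral_sub ia2 ib, circleIntegral.integral_const_mul, hc1, hc0]
    ring
  have hfint : IntervalIntegrable
      (fun θ : ℝ => 2 * Complex.exp (θ * Complex.I) / (Complex.exp (θ * Complex.I) - z))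
      volume 0 (2*π) := (cont_f hz).intervalIntegrable _ _
  have key : (∫ θ in (0:ℝ)..(2*π),
      (Complex.I * (2 * Complex.exp (θ * Complex.I) / (Complex.exp (θ * Complex.I) - z))
        - Complex.I)) = 2 * π * Complex.I := by
    rw [← hsub, circleIntegral]
    apply intervalIntegral.integral_congr
    intro θ _
    have hexp : circleMap 0 1 θ = Complex.exp (θ * Complex.I) := by
      simp [circleMap]
    have hexpne : Complex.exp (θ * Complex.I) ≠ 0 := Complex.exp_ne_zero _
    have hsubne : Complex.exp (θ * Complex.I) - z ≠ 0 := exp_sub_ne hz θ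
    simp only [deriv_circleMap, hexp, smul_eq_mul]
    field_simp
    ring
  have hs : ((2*π:ℝ) • Complex.I : ℂ) = ∫ θ in (0:ℝ)..(2*π), Complex.I := by
    rw [intervalIntegral.integral_const]
    norm_num
  have key2 : Complex.I * (∫ θ in (0:ℝ)..(2*π),
      2 * Complex.exp (θ * Complex.I) / (Complex.exp (θ * Complex.I) - z))
      - (2*π:ℝ) • Complex.I = 2 * π * Complex.I := by
    rw [← intervalIntegral.integral_const_mul, hs,
      ← intervalIntegral.integral_sub (hfint.const_mul _) intervalIntegrable_const]
    exact key
  have hs' : ((2*π:ℝ) • Complex.I : ℂ) = 2 * (π:ℂ) * Complex.I := by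
    rw [Complex.real_smul]
    push_cast
    ring
  rw [hs'] at key2
  apply mul_left_cancel₀ Complex.I_ne_zero
  linear_combination key2

lemma integral_pk {z : ℂ} (hz : ‖z‖ < 1) : ∫ θ, pk z θ ∂circleM = 1 := by
  have hfint : IntervalIntegrable
      (fun θ : ℝ => 2 * Complex.exp (θ * Complex.I) / (Complex.exp (θ * Complex.I) - z))
      volume 0 (2*π) := (cont_f hz).intervalIntegrable _ _
  have hre : (∫ θ in (0:ℝ)..(2*π),
      (2 * Complex.exp (θ * Complex.I) / (Complex.exp (θ * Complex.I) - z)).re) = 4 * π := by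
    have h := Complex.reCLM.intervalIntegral_comp_comm hfint
    simp only [Complex.reCLM_apply] at h
    rw [h, integral_f hz]
    norm_num
  have hpk : (∫ θ in (0:ℝ)..(2*π), pk z θ) = 2 * π := by
    rw [intervalIntegral.integral_congr (g := fun θ =>
      (2 * Complex.exp (θ * Complex.I) / (Complex.exp (θ * Complex.I) - z)).re - 1)
      (fun θ _ => pk_eq hz θ)]
    have hcre : Continuous (fun θ : ℝ =>
        (2 * Complex.exp (θ * Complex.I) / (Complex.exp (θ * Complex.I) - z)).re) :=
      Complex.continuous_re.comp (cont_f hz)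
    rw [intervalIntegral.integral_sub (hcre.intervalIntegrable _ _)
      intervalIntegrable_const, hre, intervalIntegral.integral_const]
    simp
    ring
  have h2pi : (0:ℝ) < 2 * π := by positivity
  rw [circleM, integral_smul_measure]
  rw [intervalIntegral.integral_of_le h2pi.le] at hpk
  rw [hpk, ENNReal.toReal_inv, ENNReal.toReal_ofReal h2pi.le, smul_eq_mul]
  field_simp

lemma pk_integrable {z : ℂ} (hz : ‖z‖ < 1) : Integrable (pk z) circleM := by
  rw [circleM]
  refine Integrable.smul_measure ?_ ?_
  · exact (pk_cont hz).integrableOn_Ioc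
  · rw [ne_eq, ENNReal.inv_eq_top]
    simp only [ENNReal.ofReal_eq_zero, not_le]
    positivity

lemma mem_disk_abs {z : ℂ} (hzD : z ∈ unitDisk) : ‖z‖ < 1 := by
  simpa [unitDisk, Metric.mem_ball, Complex.dist_eq] using hzD

/-- If F ∈ H^∞ is G-extremal (‖F‖_G = ‖F‖_∞) and I is inner,
then IF is G-extremal: ‖IF‖_G = ‖IF‖_∞. -/
theorem G_extremal_mul_inner (Fa : ℂ → ℂ) (Fb : ℝ → ℂ) (Ia : ℂ → ℂ) (Ib : ℝ → ℂ)
    (hFinf : MemLp Fb ⊤ circleM)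
    (hFanal : DifferentiableOn ℂ Fa unitDisk)
    (hFrec : ∀ z ∈ unitDisk, poissonInt Fb z = Fa z)
    (hIanal : DifferentiableOn ℂ Ia unitDisk)
    (hIbdd : ∃ C : ℝ, ∀ z ∈ unitDisk, ‖Ia z‖ ≤ C)
    (hIuni : ∀ᵐ θ ∂circleM, ‖Ib θ‖ = 1)
    (hIrec : ∀ z ∈ unitDisk, poissonInt Ib z = Ia z)
    (hProdrec : ∀ z ∈ unitDisk,
      poissonInt (fun θ => Ib θ * Fb θ) z = Ia z * Fa z)
    (hFext : garsiaNorm Fb = eLpNorm Fb ⊤ circleM) :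
    garsiaNorm (fun θ => Ib θ * Fb θ) =
      eLpNorm (fun θ => Ib θ * Fb θ) ⊤ circleM := by
  -- Step A : boundary norms agree
  have hnorm_eq : eLpNorm (fun θ => Ib θ * Fb θ) ⊤ circleM = eLpNorm Fb ⊤ circleM := by
    apply eLpNorm_congr_norm_ae
    filter_upwards [hIuni] with θ h
    rw [norm_mul] at *
    rw [h, one_mul]
  -- Step B : the quadratic Poisson integrals agree
  have hint_eq : ∀ z : ℂ,
      (∫ θ, pk z θ * ‖Ib θ * Fb θ‖ ^ 2 ∂circleM)
        = ∫ θ, pk z θ * ‖Fb θ‖ ^ 2 ∂circleM := by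
    intro z
    apply integral_congr_ae
    filter_upwards [hIuni] with θ h
    rw [norm_mul, h, one_mul]
  -- Step C : |Ia| ≤ 1 on the disk
  have hIa : ∀ z ∈ unitDisk, ‖Ia z‖ ≤ 1 := by
    intro z hzD
    have hz := mem_disk_abs hzD
    rw [← hIrec z hzD, poissonInt]
    calc ‖∫ θ, (pk z θ : ℂ) * Ib θ ∂circleM‖
        ≤ ∫ θ, ‖(pk z θ : ℂ) * Ib θ‖ ∂circleM := norm_integral_le_integral_norm _
      _ = ∫ θ, pk z θ ∂circleM := by
          apply integral_congr_ae
          filter_upwards [hIuni] with θ h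
          rw [norm_mul] at *
          rw [h, mul_one, Complex.norm_real, Real.norm_of_nonneg (pk_nonneg hz θ)]
      _ = 1 := integral_pk hz
  -- Step D : upper bound for the Garsia norm of I*F
  set M : ℝ := (eLpNorm Fb ⊤ circleM).toReal with hM
  have hMfin : eLpNorm Fb ⊤ circleM ≠ ⊤ := hFinf.2.ne
  have hM0 : 0 ≤ M := ENNReal.toReal_nonneg
  have hMae : ∀ᵐ θ ∂circleM, ‖Fb θ‖ ≤ M := by
    have h := ae_le_eLpNormEssSup (f := Fb) (μ := circleM)
    filter_upwards [h] with θ hθ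
    rw [eLpNorm_exponent_top] at hMfin hM
    have := ENNReal.toReal_mono hMfin hθ
    rw [hM]
    simpa using this
  have hupper : garsiaNorm (fun θ => Ib θ * Fb θ) ≤ eLpNorm Fb ⊤ circleM := by
    apply iSup_le
    rintro ⟨z, hzD⟩
    have hz := mem_disk_abs hzD
    have h1 : Phi (fun θ => Ib θ * Fb θ) z ≤ M ^ 2 := by
      have h2 : (∫ θ, pk z θ * ‖Ib θ * Fb θ‖ ^ 2 ∂circleM) ≤ M ^ 2 := by
        rw [hint_eq z]
        calc (∫ θ, pk z θ * ‖Fb θ‖ ^ 2 ∂circleM)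
            ≤ ∫ θ, pk z θ * M ^ 2 ∂circleM := by
              apply integral_mono_of_nonneg
              · filter_upwards with θ
                have := pk_nonneg hz θ
                positivity
              · exact (pk_integrable hz).mul_const _
              · filter_upwards [hMae] with θ h
                apply mul_le_mul_of_nonneg_left _ (pk_nonneg hz θ)
                exact pow_le_pow_left₀ (norm_nonneg _) h 2
          _ = M ^ 2 := by rw [integral_mul_const, integral_pk hz, one_mul]
      have h3 : (0:ℝ) ≤ ‖poissonInt (fun θ => Ib θ * Fb θ) z‖ ^ 2 := by positivity
      rw [Phi]
      linarith
    have h4 : Real.sqrt (Phi (fun θ => Ib θ * Fb θ) z) ≤ M := by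
      calc Real.sqrt (Phi (fun θ => Ib θ * Fb θ) z) ≤ Real.sqrt (M ^ 2) :=
            Real.sqrt_le_sqrt h1
        _ = M := by rw [Real.sqrt_sq hM0]
    calc ENNReal.ofReal (Real.sqrt (Phi (fun θ => Ib θ * Fb θ) z))
        ≤ ENNReal.ofReal M := ENNReal.ofReal_le_ofReal h4
      _ = eLpNorm Fb ⊤ circleM := ENNReal.ofReal_toReal hMfin
  -- Step E : lower bound
  have hlower : garsiaNorm Fb ≤ garsiaNorm (fun θ => Ib θ * Fb θ) := by
    apply iSup_mono
    rintro ⟨z, hzD⟩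
    have hz := mem_disk_abs hzD
    apply ENNReal.ofReal_le_ofReal
    apply Real.sqrt_le_sqrt
    rw [Phi, Phi, hFrec z hzD, hProdrec z hzD, hint_eq z]
    have h5 : ‖Ia z * Fa z‖ ^ 2 ≤ ‖Fa z‖ ^ 2 := by
      rw [norm_mul]
      have h6 := hIa z hzD
      have h7 := norm_nonneg (Ia z)
      have h8 := norm_nonneg (Fa z)
      have h9 : ‖Ia z‖ ^ 2 ≤ 1 := by nlinarith
      nlinarith [sq_nonneg ‖Fa z‖, mul_le_mul_of_nonneg_right h9 (sq_nonneg ‖Fa z‖)]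
    linarith
  apply le_antisymm
  · rw [hnorm_eq]
    exact hupper
  · calc eLpNorm (fun θ => Ib θ * Fb θ) ⊤ circleM = eLpNorm Fb ⊤ circleM := hnorm_eq
      _ = garsiaNorm Fb := hFext.symm
      _ ≤ garsiaNorm (fun θ => Ib θ * Fb θ) := hlower
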